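/- arXiv:2205.05238 — 2 statements merged into one kernel-verified Lean document; each statement's English description precedes it below -/
import Mathlib

section
/- Let p be an odd prime and let B ⊂ GL_2(F_p) be a subgroup of upper triangular matrices containing a matrix g = [[a,b],[0,c]] with a ≠ c. Let h = [[1, b/(c−a)],[0,1]] and B' = h⁻¹ B h. Then B' decomposes as B' = B'_d · B'_1, where B'_d = B' ∩ {diagonal matrices} and B'_1 = B' ∩ {[[1,b],[0,1]] : b ∈ F_p}. -/
/-!
Conjugating by `h` makes `g` diagonal, `g' = diag(a, c)`, and keeps `B'` upper triangular.
Write `x ∈ B'` as `x = d u` with `d` diagonal and `u = [[1, t], [0, 1]]`. Diagonal matrices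
commute, so the commutator `x⁻¹ g' x g'⁻¹ = u⁻¹ (g' u g'⁻¹)` is unipotent with upper right entry
`(a / c - 1) t`. As `a ≠ c` and every element of `𝔽_p` is an integer multiple of any nonzero one,
some power of this commutator is `u`; hence `u ∈ B'` and `d = x u⁻¹ ∈ B'`.
-/

open Matrix Matrix.GeneralLinearGroup

section CommRing

variable {R : Type*} [CommRing R]

lemma commute_of_diagonal {d e : GL (Fin 2) R} (hd01 : d 0 1 = 0) (hd10 : d 1 0 = 0)
    (he01 : e 0 1 = 0) (he10 : e 1 0 = 0) : Commute d e := by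
  ext i j
  rw [Units.val_mul, Units.val_mul, eta_fin_two (d : Matrix (Fin 2) (Fin 2) R),
    eta_fin_two (e : Matrix (Fin 2) (Fin 2) R)]
  fin_cases i <;> fin_cases j <;> simp [hd01, hd10, he01, he10, mul_comm]

lemma val_conj_upperRightHom (y : GL (Fin 2) R) (hy : y 1 0 = 0) (q : R) :
    (((upperRightHom q)⁻¹ * y * upperRightHom q : GL (Fin 2) R) : Matrix (Fin 2) (Fin 2) R) =
      !![y 0 0, y 0 1 - q * (y 1 1 - y 0 0); 0, y 1 1] := by
  rw [← AddChar.map_neg_eq_inv, Units.val_mul, Units.val_mul,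
    eta_fin_two (y : Matrix (Fin 2) (Fin 2) R)]
  ext i j
  fin_cases i <;> fin_cases j <;> simp [hy]
  ring

end CommRing

section Field

variable {K : Type*} [Field K]

lemma diag_ne_zero_of_upperTriangular {x : GL (Fin 2) K} (hx : x 1 0 = 0) :
    x 0 0 ≠ 0 ∧ x 1 1 ≠ 0 := by
  have hdet := Matrix.isUnits_det_units x
  rwa [Matrix.det_fin_two, hx, mul_zero, sub_zero, isUnit_iff_ne_zero, mul_ne_zero_iff] at hdet

lemma mul_upperRightHom_eq_of_diagonal {g : GL (Fin 2) K} (h01 : g 0 1 = 0) (h10 : g 1 0 = 0)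
    (t : K) : g * upperRightHom t = upperRightHom (g 0 0 / g 1 1 * t) * g := by
  have h11 := (diag_ne_zero_of_upperTriangular h10).2
  ext i j
  rw [Units.val_mul, Units.val_mul, eta_fin_two (g : Matrix (Fin 2) (Fin 2) K)]
  fin_cases i <;> fin_cases j <;> simp [h01, h10]
  field_simp

lemma eq_diagonal_mul_upperRightHom {x : GL (Fin 2) K} (hx : x 1 0 = 0) :
    ∃ d : GL (Fin 2) K, (d 0 1 = 0 ∧ d 1 0 = 0) ∧ x = d * upperRightHom (x 0 1 / x 0 0) := by
  have h00 := (diag_ne_zero_of_upperTriangular hx).1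
  refine ⟨x * (upperRightHom (x 0 1 / x 0 0))⁻¹, ?_, (inv_mul_cancel_right _ _).symm⟩
  rw [← AddChar.map_neg_eq_inv, Units.val_mul, eta_fin_two (x : Matrix (Fin 2) (Fin 2) K)]
  simp [hx]
  field_simp
  ring

end Field

section ZMod

variable {p : ℕ} [Fact p.Prime]

lemma upperRightHom_mul_mem {S : Subgroup (GL (Fin 2) (ZMod p))} {t : ZMod p}
    (ht : upperRightHom t ∈ S) (k : ZMod p) : upperRightHom (k * t) ∈ S := by
  rw [← ZMod.natCast_zmod_val k, ← nsmul_eq_mul, AddChar.map_nsmul_eq_pow]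
  exact pow_mem ht _

theorem exists_mem_diagonal_mul_upperRightHom_mem {S : Subgroup (GL (Fin 2) (ZMod p))}
    {g x : GL (Fin 2) (ZMod p)} (hg : g ∈ S) (hx : x ∈ S) (hg01 : g 0 1 = 0) (hg10 : g 1 0 = 0)
    (hac : g 0 0 ≠ g 1 1) (hx10 : x 1 0 = 0) :
    ∃ d ∈ S, (d 0 1 = 0 ∧ d 1 0 = 0) ∧
      upperRightHom (x 0 1 / x 0 0) ∈ S ∧ x = d * upperRightHom (x 0 1 / x 0 0) := by
  obtain ⟨d, hd_diag, hxd⟩ := eq_diagonal_mul_upperRightHom hx10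
  generalize x 0 1 / x 0 0 = t at hxd ⊢
  set r := g 0 0 / g 1 1
  have hr : r - 1 ≠ 0 := by
    rwa [sub_ne_zero, Ne, div_eq_one_iff_eq (diag_ne_zero_of_upperTriangular hg10).2]
  have hcomm : x⁻¹ * g * x * g⁻¹ = upperRightHom ((r - 1) * t) := by
    have hdg : d⁻¹ * g * d = g := by
      rw [mul_assoc, (commute_of_diagonal hg01 hg10 hd_diag.1 hd_diag.2).eq, inv_mul_cancel_left]
    calc x⁻¹ * g * x * g⁻¹
        = (upperRightHom t)⁻¹ * (d⁻¹ * g * d) * upperRightHom t * g⁻¹ := by rw [hxd]; group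
      _ = (upperRightHom t)⁻¹ * (g * upperRightHom t * g⁻¹) := by rw [hdg]; group
      _ = upperRightHom (-t + r * t) := by
        rw [mul_upperRightHom_eq_of_diagonal hg01 hg10, mul_inv_cancel_right,
          AddChar.map_add_eq_mul, AddChar.map_neg_eq_inv]
      _ = upperRightHom ((r - 1) * t) := by ring_nf
  have hu : upperRightHom t ∈ S := by
    have hcomm_mem : upperRightHom ((r - 1) * t) ∈ S :=
      hcomm ▸ mul_mem (mul_mem (mul_mem (inv_mem hx) hg) hx) (inv_mem hg)
    simpa only [inv_mul_cancel_left₀ hr] using upperRightHom_mul_mem hcomm_mem (r - 1)⁻¹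
  exact ⟨d, eq_mul_inv_of_mul_eq hxd.symm ▸ mul_mem hx (inv_mem hu), hd_diag, hu, hxd⟩

end ZMod

theorem borel_conjugate_decomposition_general
    (p : ℕ) [Fact p.Prime]
    (B : Subgroup (GL (Fin 2) (ZMod p)))
    (hB : ∀ x ∈ B, (x : Matrix (Fin 2) (Fin 2) (ZMod p)) 1 0 = 0)
    (g : GL (Fin 2) (ZMod p)) (hg : g ∈ B)
    (hac : (g : Matrix (Fin 2) (Fin 2) (ZMod p)) 0 0
         ≠ (g : Matrix (Fin 2) (Fin 2) (ZMod p)) 1 1)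
    (h : GL (Fin 2) (ZMod p))
    (hh : (h : Matrix (Fin 2) (Fin 2) (ZMod p)) =
      !![1, (g : Matrix (Fin 2) (Fin 2) (ZMod p)) 0 1 /
           ((g : Matrix (Fin 2) (Fin 2) (ZMod p)) 1 1
            - (g : Matrix (Fin 2) (Fin 2) (ZMod p)) 0 0); 0, 1])
    (B' : Subgroup (GL (Fin 2) (ZMod p)))
    (hB' : B' = Subgroup.map (MulAut.conj h⁻¹).toMonoidHom B) :
    ∀ x ∈ B', ∃ d ∈ B', ∃ u ∈ B',
      ((d : Matrix (Fin 2) (Fin 2) (ZMod p)) 0 1 = 0 ∧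
       (d : Matrix (Fin 2) (Fin 2) (ZMod p)) 1 0 = 0) ∧
      ((u : Matrix (Fin 2) (Fin 2) (ZMod p)) 0 0 = 1 ∧
       (u : Matrix (Fin 2) (Fin 2) (ZMod p)) 1 1 = 1 ∧
       (u : Matrix (Fin 2) (Fin 2) (ZMod p)) 1 0 = 0) ∧
      x = d * u := by
  set q := g 0 1 / (g 1 1 - g 0 0)
  obtain rfl : h = upperRightHom q := Units.ext (by simpa using hh)
  have hconj : ∀ y,
      MulAut.conj (upperRightHom q)⁻¹ y = (upperRightHom q)⁻¹ * y * upperRightHom q := fun y ↦ by rw [MulAut.conj_apply, inv_inv]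
  have hB'_tri : ∀ y ∈ B', y 1 0 = 0 := by
    rw [hB']
    rintro _ ⟨y, hy, rfl⟩
    rw [MulEquiv.coe_toMonoidHom, hconj, val_conj_upperRightHom y (hB y hy)]
    rfl
  have hg' := val_conj_upperRightHom g (hB g hg) q
  rw [div_mul_cancel₀ _ (sub_ne_zero.mpr hac.symm), sub_self] at hg'
  have hg'_mem : (upperRightHom q)⁻¹ * g * upperRightHom q ∈ B' := hB' ▸ ⟨g, hg, hconj g⟩
  intro x hx
  obtain ⟨d, hd, hdiag, hu, hxd⟩ := exists_mem_diagonal_mul_upperRightHom_mem hg'_mem hx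
    (by rw [hg']; rfl) (by rw [hg']; rfl) (by rwa [hg']) (hB'_tri x hx)
  exact ⟨d, hd, _, hu, hdiag, by simp, hxd⟩

/-- Kohnen–Zagier/Lansky–Ramakrishna decomposition: for an odd prime `p` and a subgroup
`B` of upper triangular matrices in `GL₂(𝔽_p)` containing a matrix `g = [[a,b],[0,c]]`
with `a ≠ c`, the conjugate `B' = h⁻¹ B h` by `h = [[1, b/(c−a)],[0,1]]` decomposes as
`B' = B'_d · B'_1` with `B'_d` the diagonal part and `B'_1` the unipotent part. -/
theorem borel_conjugate_decomposition
    (p : ℕ) [Fact p.Prime] (hodd : p ≠ 2)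
    (B : Subgroup (GL (Fin 2) (ZMod p)))
    (hB : ∀ x ∈ B, (x : Matrix (Fin 2) (Fin 2) (ZMod p)) 1 0 = 0)
    (g : GL (Fin 2) (ZMod p)) (hg : g ∈ B)
    (hac : (g : Matrix (Fin 2) (Fin 2) (ZMod p)) 0 0
         ≠ (g : Matrix (Fin 2) (Fin 2) (ZMod p)) 1 1)
    (h : GL (Fin 2) (ZMod p))
    (hh : (h : Matrix (Fin 2) (Fin 2) (ZMod p)) =
      !![1, (g : Matrix (Fin 2) (Fin 2) (ZMod p)) 0 1 /
           ((g : Matrix (Fin 2) (Fin 2) (ZMod p)) 1 1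
            - (g : Matrix (Fin 2) (Fin 2) (ZMod p)) 0 0); 0, 1])
    (B' : Subgroup (GL (Fin 2) (ZMod p)))
    (hB' : B' = Subgroup.map (MulAut.conj h⁻¹).toMonoidHom B) :
    ∀ x ∈ B', ∃ d ∈ B', ∃ u ∈ B',
      ((d : Matrix (Fin 2) (Fin 2) (ZMod p)) 0 1 = 0 ∧
       (d : Matrix (Fin 2) (Fin 2) (ZMod p)) 1 0 = 0) ∧
      ((u : Matrix (Fin 2) (Fin 2) (ZMod p)) 0 0 = 1 ∧
       (u : Matrix (Fin 2) (Fin 2) (ZMod p)) 1 1 = 1 ∧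
       (u : Matrix (Fin 2) (Fin 2) (ZMod p)) 1 0 = 0) ∧
      x = d * u :=
  borel_conjugate_decomposition_general p B hB g hg hac h hh B' hB'
end

section
/- The 33rd Fourier coefficient of g = (60/(2πi))·(2G_4(4z)θ'(z) − G_4'(4z)θ(z)) ∈ S⁺_{13/2}(Γ_0(4)) equals −6480 = −2^4·3^4·5, and in particular is not divisible by 11. -/
/-- `σ₃(n) = Σ_{0<d∣n} d³`. -/
noncomputable def sigma3 (n : ℕ) : ℚ := ∑ d ∈ n.divisors, (d : ℚ) ^ 3

/-- Fourier coefficients of `G₄(4z) = 1/240 + Σ_{n≥1} σ₃(n) q^{4n}`. -/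
noncomputable def G4FourZCoeff (m : ℕ) : ℚ :=
  if m = 0 then 1 / 240 else if 4 ∣ m then sigma3 (m / 4) else 0

/-- Fourier coefficients of `θ(z) = 1 + 2 Σ_{n≥1} q^{n²}`. -/
noncomputable def thetaCoeff (n : ℕ) : ℚ :=
  if n = 0 then 1 else if IsSquare n then 2 else 0

/-- The `N`-th Fourier coefficient of
`g = (60/(2πi))·(2·G₄(4z)·θ'(z) − G₄'(4z)·θ(z)) ∈ S⁺_{13/2}(Γ₀(4))`,
where `(1/(2πi))·d/dz` acts on `q^n` as multiplication by `n` (and on `G₄` at `4z`,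
`G₄'(4z)` contributes `m/4` at `q^m`). -/
noncomputable def kohnenZagierCoeff (N : ℕ) : ℚ :=
  60 * ∑ m ∈ Finset.range (N + 1),
    (2 * ((N : ℚ) - m) - (m : ℚ) / 4) * G4FourZCoeff m * thetaCoeff (N - m)

/-- The 33rd Fourier coefficient of `g` equals `−6480 = −2⁴·3⁴·5`; in particular it is
not divisible by 11. -/
theorem kohnenZagier_coeff_33 :
    kohnenZagierCoeff 33 = -6480 ∧
    (-6480 : ℤ) = -(2 ^ 4 * 3 ^ 4 * 5) ∧
    ¬ (11 : ℤ) ∣ (-6480 : ℤ) := by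
  refine ⟨?_, by norm_num, by decide⟩
  have hsq : ∀ n : ℕ, IsSquare n ↔ Nat.sqrt n * Nat.sqrt n = n := fun n =>
    ⟨fun ⟨r, hr⟩ => by rw [hr]; simp [Nat.sqrt_eq], fun h => ⟨Nat.sqrt n, h.symm⟩⟩
  unfold kohnenZagierCoeff G4FourZCoeff thetaCoeff sigma3
  norm_num [Finset.sum_range_succ, hsq, Nat.divisors]
  have h2 : Finset.filter (fun d => d ∣ 2) (Finset.Ico 1 3) = {1,2} := by decide
  have h6 : Finset.filter (fun d => d ∣ 6) (Finset.Ico 1 7) = {1,2,3,6} := by decide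
  have h8 : Finset.filter (fun d => d ∣ 8) (Finset.Ico 1 9) = {1,2,4,8} := by decide
  rw [h2, h6, h8]
  norm_num
end
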